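/- Let d ≥ 2 and let Δ_d^* be the convex hull in ℝ^{2(d−1)} of the d^2 points h_{i,j}, i, j ∈ {1,…,d}. Then the only points of the lattice N (the subgroup of ℤ^{2(d−1)} generated by the h_{i,j}) lying in Δ_d^* are the origin 0 and the d^2 points h_{i,j} themselves. (This is the combinatorial statement expressing that all singularities of the Gorenstein toric Fano variety V_{d,2(d−1)} defined by the fan of cones over the faces of Δ_d^* are terminal: the only N-lattice points on the faces of Δ_d^* are its vertices.) -/
import Mathlib


/-- The vector `e_i ∈ ℝ^{2(d−1)}` (coordinates indexed by `Fin (d−1) ⊕ Fin (d−1)`): for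
`i < d − 1` it is the `i`-th standard basis vector of the first block, and
`e_d = −(e_1 + ⋯ + e_{d−1})`. -/
def eVec (d : ℕ) (i : Fin d) : (Fin (d - 1) ⊕ Fin (d - 1)) → ℝ :=
  if h : (i : ℕ) < d - 1 then Pi.single (Sum.inl ⟨i, h⟩) 1
  else -∑ i' : Fin (d - 1), Pi.single (Sum.inl i') 1

/-- The vector `f_j ∈ ℝ^{2(d−1)}`: for `j < d − 1` it is the `j`-th standard basis vector of
the second block, and `f_d = −(f_1 + ⋯ + f_{d−1})`. -/
def fVec (d : ℕ) (j : Fin d) : (Fin (d - 1) ⊕ Fin (d - 1)) → ℝ :=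
  if h : (j : ℕ) < d - 1 then Pi.single (Sum.inr ⟨j, h⟩) 1
  else -∑ j' : Fin (d - 1), Pi.single (Sum.inr j') 1

/-- `h_{i,j} := e_i + f_j`. -/
def hVec (d : ℕ) (i j : Fin d) : (Fin (d - 1) ⊕ Fin (d - 1)) → ℝ :=
  eVec d i + fVec d j

lemma eVec_inl (e : ℕ) (i : Fin (e+1)) (a : Fin e) :
    eVec (e+1) i (Sum.inl a) =
      (if (i:ℕ) = (a:ℕ) then 1 else 0) - (if (i:ℕ) = e then 1 else 0) := by
  have hae : (a : ℕ) < e := a.isLt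
  unfold eVec
  by_cases h : (i:ℕ) < e+1-1
  · rw [dif_pos h]
    simp only [Pi.single_apply, Sum.inl.injEq, Fin.ext_iff]
    have : (i:ℕ) ≠ e := by omega
    rw [if_neg this]
    by_cases hia : (i:ℕ) = (a:ℕ) <;> simp [hia, eq_comm]
  · rw [dif_neg h]
    have hie : (i:ℕ) = e := by have := i.isLt; omega
    simp only [Pi.neg_apply, Finset.sum_apply, Pi.single_apply, Sum.inl.injEq]
    rw [if_neg (by omega), if_pos hie]
    rw [neg_eq_iff_eq_neg]
    simp

lemma eVec_inr (e : ℕ) (i : Fin (e+1)) (b : Fin e) :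
    eVec (e+1) i (Sum.inr b) = 0 := by
  unfold eVec
  by_cases h : (i:ℕ) < e+1-1
  · rw [dif_pos h]; simp [Pi.single_apply]
  · rw [dif_neg h]; simp [Pi.single_apply]

lemma fVec_inr (e : ℕ) (j : Fin (e+1)) (b : Fin e) :
    fVec (e+1) j (Sum.inr b) =
      (if (j:ℕ) = (b:ℕ) then 1 else 0) - (if (j:ℕ) = e then 1 else 0) := by
  have hae : (b : ℕ) < e := b.isLt
  unfold fVec
  by_cases h : (j:ℕ) < e+1-1
  · rw [dif_pos h]
    simp only [Pi.single_apply, Sum.inr.injEq, Fin.ext_iff]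
    have : (j:ℕ) ≠ e := by omega
    rw [if_neg this]
    by_cases hia : (j:ℕ) = (b:ℕ) <;> simp [hia, eq_comm]
  · rw [dif_neg h]
    have hie : (j:ℕ) = e := by have := j.isLt; omega
    simp only [Pi.neg_apply, Finset.sum_apply, Pi.single_apply, Sum.inr.injEq]
    rw [if_neg (by omega), if_pos hie]
    rw [neg_eq_iff_eq_neg]
    simp

lemma fVec_inl (e : ℕ) (j : Fin (e+1)) (a : Fin e) :
    fVec (e+1) j (Sum.inl a) = 0 := by
  unfold fVec
  by_cases h : (j:ℕ) < e+1-1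
  · rw [dif_pos h]; simp [Pi.single_apply]
  · rw [dif_neg h]; simp [Pi.single_apply]

lemma hVec_inl (e : ℕ) (i j : Fin (e+1)) (a : Fin e) :
    hVec (e+1) i j (Sum.inl a) =
      (if (i:ℕ) = (a:ℕ) then 1 else 0) - (if (i:ℕ) = e then 1 else 0) := by
  show eVec (e+1) i (Sum.inl a) + fVec (e+1) j (Sum.inl a) = _
  rw [eVec_inl, fVec_inl]; ring

lemma hVec_inr (e : ℕ) (i j : Fin (e+1)) (b : Fin e) :
    hVec (e+1) i j (Sum.inr b) =
      (if (j:ℕ) = (b:ℕ) then 1 else 0) - (if (j:ℕ) = e then 1 else 0) := by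
  show eVec (e+1) i (Sum.inr b) + fVec (e+1) j (Sum.inr b) = _
  rw [eVec_inr, fVec_inr]; ring

lemma sum_ind (e : ℕ) (i : Fin (e+1)) :
    ∑ a : Fin e, (if (i:ℕ) = (a:ℕ) then (1:ℝ) else 0) = if (i:ℕ) < e then 1 else 0 := by
  by_cases h : (i:ℕ) < e
  · rw [if_pos h, Finset.sum_eq_single (⟨i, h⟩ : Fin e)]
    · simp
    · intro b _ hb
      rw [if_neg]
      intro hc; exact hb (by simp [Fin.ext_iff, ← hc])
    · simp
  · rw [if_neg h]
    apply Finset.sum_eq_zero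
    intro a _
    rw [if_neg]
    have := a.isLt; omega

lemma sum_ind' (m t : ℕ) (ht : t < m) :
    ∑ i : Fin m, (if (i:ℕ) = t then (1:ℝ) else 0) = 1 := by
  rw [Finset.sum_eq_single (⟨t, ht⟩ : Fin m)]
  · simp
  · intro b _ hb
    rw [if_neg]
    intro hc; exact hb (by simp [Fin.ext_iff, hc])
  · simp

lemma no_mixed (E m v : ℤ) (h : v = (E+1)*m) (h1 : v ≠ 0) (h2 : -E ≤ v) (h3 : v ≤ E)
    (hE : 0 ≤ E) : False := by
  rcases lt_trichotomy m 0 with hm | hm | hm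
  · nlinarith
  · rw [hm, mul_zero] at h; exact h1 h
  · nlinarith


lemma classify (e : ℕ) (n : Fin e → ℤ)
    (h1 : ∑ a, n a ≤ 1) (h2 : ∀ k, (∑ a, n a) - ((e:ℤ)+1) * n k ≤ 1) :
    (∀ a, n a = 0) ∨ (∃ k, ∀ a, n a = if a = k then 1 else 0) ∨ (∀ a, n a = -1) := by
  set S := ∑ a, n a with hS
  have hSlb : -(e:ℤ) ≤ S := by
    have h := Finset.sum_le_sum (f := fun k => S - ((e:ℤ)+1) * n k) (g := fun _ => (1:ℤ))
      (fun k _ => h2 k) (s := Finset.univ)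
    simp only [Finset.sum_sub_distrib, Finset.sum_const, Finset.card_univ, Fintype.card_fin,
      nsmul_eq_mul, mul_one, ← Finset.mul_sum, ← hS] at h
    nlinarith
  by_cases hpos : ∀ a, 0 ≤ n a
  · have hS0 : 0 ≤ S := Finset.sum_nonneg fun a _ => hpos a
    have : S = 0 ∨ S = 1 := by omega
    rcases this with h0 | hone
    · left
      have := (Finset.sum_eq_zero_iff_of_nonneg (fun a _ => hpos a)).1 h0
      exact fun a => this a (Finset.mem_univ a)
    · right; left
      have hk : ∃ k, 1 ≤ n k := by
        by_contra hc
        push_neg at hc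
        have : ∀ a ∈ Finset.univ, n a = 0 := fun a _ => le_antisymm (by linarith [hc a]) (hpos a)
        rw [hS, Finset.sum_congr rfl this] at hone
        simp at hone
      obtain ⟨k, hk⟩ := hk
      have herase : ∑ a ∈ Finset.univ.erase k, n a = S - n k := by
        have := Finset.sum_erase_add Finset.univ n (Finset.mem_univ k)
        linarith
      have hener : 0 ≤ ∑ a ∈ Finset.univ.erase k, n a :=
        Finset.sum_nonneg fun a _ => hpos a
      have hnk : n k = 1 := by omega
      have hzero : ∀ a ∈ Finset.univ.erase k, n a = 0 := by
        apply (Finset.sum_eq_zero_iff_of_nonneg (fun a _ => hpos a)).1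
        omega
      refine ⟨k, fun a => ?_⟩
      by_cases ha : a = k
      · simp [ha, hnk]
      · simp [ha, hzero a (Finset.mem_erase.2 ⟨ha, Finset.mem_univ a⟩)]
  · push_neg at hpos
    obtain ⟨k0, hk0⟩ := hpos
    have hk0' : n k0 ≤ -1 := by omega
    have hSe : S = -(e:ℤ) := by
      have := h2 k0
      nlinarith [Nat.cast_nonneg (α := ℤ) e]
    right; right
    have hlb : ∀ a, -1 ≤ n a := by
      intro a
      by_contra hc
      push_neg at hc
      have hc' : n a ≤ -2 := by omega
      have h := h2 a
      nlinarith [Nat.cast_nonneg (α := ℤ) e]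
    have hsum0 : ∑ a, (n a + 1) = 0 := by
      rw [Finset.sum_add_distrib]
      simp [← hS, hSe]
    have := (Finset.sum_eq_zero_iff_of_nonneg (fun a _ => by linarith [hlb a])).1 hsum0
    intro a
    have := this a (Finset.mem_univ a)
    omega

/-- Let `d ≥ 2`, let `Δ_d^*` be the convex hull of the `d²` points `h_{i,j}`
in `ℝ^{2(d−1)}`, and let `N` be the lattice (additive subgroup) generated by the `h_{i,j}`.
Then the only points of `N` lying in `Δ_d^*` are the origin and the `d²` points `h_{i,j}`
themselves. -/
theorem statement10 (d : ℕ) (hd : 2 ≤ d)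
    (N : AddSubgroup ((Fin (d - 1) ⊕ Fin (d - 1)) → ℝ))
    (hN : N = AddSubgroup.closure (Set.range fun p : Fin d × Fin d => hVec d p.1 p.2))
    (Δ : Set ((Fin (d - 1) ⊕ Fin (d - 1)) → ℝ))
    (hΔ : Δ = convexHull ℝ (Set.range fun p : Fin d × Fin d => hVec d p.1 p.2))
    (x : (Fin (d - 1) ⊕ Fin (d - 1)) → ℝ) :
    (x ∈ N ∧ x ∈ Δ) ↔ (x = 0 ∨ ∃ i j : Fin d, x = hVec d i j) := by
  obtain ⟨e, rfl⟩ : ∃ e, d = e + 1 := ⟨d - 1, by omega⟩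
  have he : 1 ≤ e := by omega
  subst hN hΔ
  constructor
  · rintro ⟨hxN, hxΔ⟩
    -- integrality and congruence
    have hint : (∀ c, ∃ m : ℤ, x c = (m:ℝ)) ∧
        ∃ m : ℤ, (∑ a : Fin e, x (Sum.inl a)) - (∑ b : Fin e, x (Sum.inr b)) = ((e:ℝ)+1) * m := by
      refine AddSubgroup.closure_induction ?_ ?_ ?_ ?_ hxN
      · rintro _ ⟨⟨i, j⟩, rfl⟩
        constructor
        · rintro (a | b)
          · exact ⟨(if (i:ℕ) = (a:ℕ) then 1 else 0) - (if (i:ℕ) = e then 1 else 0),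
              by show hVec (e+1) i j (Sum.inl a) = _
                 rw [hVec_inl]; split_ifs <;> norm_num⟩
          · exact ⟨(if (j:ℕ) = (b:ℕ) then 1 else 0) - (if (j:ℕ) = e then 1 else 0),
              by show hVec (e+1) i j (Sum.inr b) = _
                 rw [hVec_inr]; split_ifs <;> norm_num⟩
        · refine ⟨(if (j:ℕ) = e then 1 else 0) - (if (i:ℕ) = e then 1 else 0), ?_⟩
          show (∑ a : Fin e, hVec (e+1) i j (Sum.inl a))
            - (∑ b : Fin e, hVec (e+1) i j (Sum.inr b)) = _
          simp only [hVec_inl, hVec_inr, Finset.sum_sub_distrib, sum_ind, Finset.sum_const,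
            Finset.card_univ, Fintype.card_fin, nsmul_eq_mul]
          have hi := i.isLt
          have hj := j.isLt
          split_ifs <;> (try (exfalso; omega)) <;> push_cast <;> ring
      · exact ⟨fun c => ⟨0, by simp⟩, ⟨0, by simp⟩⟩
      · rintro u v - - ⟨hu1, mu, hu2⟩ ⟨hv1, mv, hv2⟩
        refine ⟨fun c => ?_, ⟨mu + mv, ?_⟩⟩
        · obtain ⟨a, ha⟩ := hu1 c
          obtain ⟨b, hb⟩ := hv1 c
          exact ⟨a + b, by simp [ha, hb]⟩
        · simp only [Pi.add_apply, Finset.sum_add_distrib]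
          push_cast
          linarith
      · rintro u - ⟨hu1, mu, hu2⟩
        refine ⟨fun c => ?_, ⟨-mu, ?_⟩⟩
        · obtain ⟨a, ha⟩ := hu1 c
          exact ⟨-a, by simp [ha]⟩
        · simp only [Pi.neg_apply, Finset.sum_neg_distrib]
          push_cast
          linarith
    -- linear inequalities from the convex hull
    have hub : ∀ (φ : ((Fin e ⊕ Fin e) → ℝ) → ℝ), IsLinearMap ℝ φ →
        (∀ i j : Fin (e+1), φ (hVec (e+1) i j) ≤ 1) → φ x ≤ 1 := by
      intro φ hφ hgen
      have hsub : convexHull ℝ (Set.range fun p : Fin (e+1) × Fin (e+1) => hVec (e+1) p.1 p.2)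
          ⊆ {y | φ y ≤ 1} := by
        apply convexHull_min
        · rintro _ ⟨⟨i, j⟩, rfl⟩
          exact hgen i j
        · exact convex_halfSpace_le hφ 1
      exact hsub hxΔ
    have lin1 : IsLinearMap ℝ (fun y : (Fin e ⊕ Fin e) → ℝ => ∑ a : Fin e, y (Sum.inl a)) :=
      ⟨fun u v => by simp [Finset.sum_add_distrib], fun c u => by simp [Finset.mul_sum]⟩
    have lin2 : ∀ k : Fin e, IsLinearMap ℝ
        (fun y : (Fin e ⊕ Fin e) → ℝ => (∑ a : Fin e, y (Sum.inl a)) - ((e:ℝ)+1) * y (Sum.inl k)) :=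
      fun k => ⟨fun u v => by simp [Finset.sum_add_distrib]; ring,
        fun c u => by simp only [Pi.smul_apply, smul_eq_mul, mul_sub, Finset.mul_sum]; ring⟩
    have lin3 : IsLinearMap ℝ (fun y : (Fin e ⊕ Fin e) → ℝ => ∑ b : Fin e, y (Sum.inr b)) :=
      ⟨fun u v => by simp [Finset.sum_add_distrib], fun c u => by simp [Finset.mul_sum]⟩
    have lin4 : ∀ k : Fin e, IsLinearMap ℝ
        (fun y : (Fin e ⊕ Fin e) → ℝ => (∑ b : Fin e, y (Sum.inr b)) - ((e:ℝ)+1) * y (Sum.inr k)) :=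
      fun k => ⟨fun u v => by simp [Finset.sum_add_distrib]; ring,
        fun c u => by simp only [Pi.smul_apply, smul_eq_mul, mul_sub, Finset.mul_sum]; ring⟩
    have hcast : (0:ℝ) ≤ (e:ℝ) := Nat.cast_nonneg e
    have I1 : ∑ a : Fin e, x (Sum.inl a) ≤ 1 := by
      refine hub _ lin1 fun i j => ?_
      show (∑ a : Fin e, hVec (e+1) i j (Sum.inl a)) ≤ 1
      simp only [hVec_inl, Finset.sum_sub_distrib, sum_ind, Finset.sum_const,
        Finset.card_univ, Fintype.card_fin, nsmul_eq_mul]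
      have hi := i.isLt
      split_ifs <;> (try (exfalso; omega)) <;> push_cast <;> linarith
    have I2 : ∀ k : Fin e, (∑ a : Fin e, x (Sum.inl a)) - ((e:ℝ)+1) * x (Sum.inl k) ≤ 1 := by
      intro k
      refine hub _ (lin2 k) fun i j => ?_
      show (∑ a : Fin e, hVec (e+1) i j (Sum.inl a)) - ((e:ℝ)+1) * hVec (e+1) i j (Sum.inl k) ≤ 1
      simp only [hVec_inl, Finset.sum_sub_distrib, sum_ind, Finset.sum_const,
        Finset.card_univ, Fintype.card_fin, nsmul_eq_mul]
      have hi := i.isLt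
      have hk := k.isLt
      split_ifs <;> (try (exfalso; omega)) <;> push_cast <;> linarith
    have I3 : ∑ b : Fin e, x (Sum.inr b) ≤ 1 := by
      refine hub _ lin3 fun i j => ?_
      show (∑ b : Fin e, hVec (e+1) i j (Sum.inr b)) ≤ 1
      simp only [hVec_inr, Finset.sum_sub_distrib, sum_ind, Finset.sum_const,
        Finset.card_univ, Fintype.card_fin, nsmul_eq_mul]
      have hj := j.isLt
      split_ifs <;> (try (exfalso; omega)) <;> push_cast <;> linarith
    have I4 : ∀ k : Fin e, (∑ b : Fin e, x (Sum.inr b)) - ((e:ℝ)+1) * x (Sum.inr k) ≤ 1 := by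
      intro k
      refine hub _ (lin4 k) fun i j => ?_
      show (∑ b : Fin e, hVec (e+1) i j (Sum.inr b)) - ((e:ℝ)+1) * hVec (e+1) i j (Sum.inr k) ≤ 1
      simp only [hVec_inr, Finset.sum_sub_distrib, sum_ind, Finset.sum_const,
        Finset.card_univ, Fintype.card_fin, nsmul_eq_mul]
      have hj := j.isLt
      have hk := k.isLt
      split_ifs <;> (try (exfalso; omega)) <;> push_cast <;> linarith
    -- transfer to integers
    obtain ⟨hint1, mcong, hcong⟩ := hint
    choose g hg using hint1
    have h1 : (∑ a : Fin e, g (Sum.inl a)) ≤ 1 := by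
      have := I1
      simp only [hg] at this
      exact_mod_cast this
    have h2 : ∀ k : Fin e, (∑ a : Fin e, g (Sum.inl a)) - ((e:ℤ)+1) * g (Sum.inl k) ≤ 1 := by
      intro k
      have := I2 k
      simp only [hg] at this
      exact_mod_cast this
    have h3 : (∑ b : Fin e, g (Sum.inr b)) ≤ 1 := by
      have := I3
      simp only [hg] at this
      exact_mod_cast this
    have h4 : ∀ k : Fin e, (∑ b : Fin e, g (Sum.inr b)) - ((e:ℤ)+1) * g (Sum.inr k) ≤ 1 := by
      intro k
      have := I4 k
      simp only [hg] at this
      exact_mod_cast this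
    have hcongZ : (∑ a : Fin e, g (Sum.inl a)) - (∑ b : Fin e, g (Sum.inr b))
        = ((e:ℤ)+1) * mcong := by
      have := hcong
      simp only [hg] at this
      exact_mod_cast this
    have cn := classify e (fun a => g (Sum.inl a)) h1 h2
    have cp := classify e (fun b => g (Sum.inr b)) h3 h4
    -- sums in each case
    have sum_zero : ∀ (n : Fin e → ℤ), (∀ a, n a = 0) → ∑ a, n a = 0 :=
      fun n hn => Finset.sum_eq_zero fun a _ => hn a
    have sum_one : ∀ (n : Fin e → ℤ) (k : Fin e), (∀ a, n a = if a = k then 1 else 0) →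
        ∑ a, n a = 1 := by
      intro n k hn
      rw [Finset.sum_congr rfl fun a _ => hn a]
      simp
    have sum_neg : ∀ (n : Fin e → ℤ), (∀ a, n a = -1) → ∑ a, n a = -(e:ℤ) := by
      intro n hn
      rw [Finset.sum_congr rfl fun a _ => hn a]
      simp
    have hE : (0:ℤ) ≤ (e:ℤ) := Int.natCast_nonneg e
    have he' : (1:ℤ) ≤ (e:ℤ) := by exact_mod_cast he
    -- build the answer
    rcases cn with cn0 | ⟨k, cnk⟩ | cnn
    · rcases cp with cp0 | ⟨l, cpl⟩ | cpn
      · left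
        funext c
        rcases c with a | b
        · have h0 : g (Sum.inl a) = 0 := cn0 a
          rw [hg (Sum.inl a), h0]; simp
        · have h0 : g (Sum.inr b) = 0 := cp0 b
          rw [hg (Sum.inr b), h0]; simp
      · exfalso
        have hv := hcongZ
        rw [sum_zero _ cn0, sum_one _ l cpl] at hv
        exact no_mixed (e:ℤ) mcong (0 - 1) hv (by omega) (by omega) (by omega) hE
      · exfalso
        have hv := hcongZ
        rw [sum_zero _ cn0, sum_neg _ cpn] at hv
        exact no_mixed (e:ℤ) mcong (0 - -(e:ℤ)) hv (by omega) (by omega) (by omega) hE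
    · rcases cp with cp0 | ⟨l, cpl⟩ | cpn
      · exfalso
        have hv := hcongZ
        rw [sum_one _ k cnk, sum_zero _ cp0] at hv
        exact no_mixed (e:ℤ) mcong (1 - 0) hv (by omega) (by omega) (by omega) hE
      · right
        refine ⟨Fin.castSucc k, Fin.castSucc l, ?_⟩
        funext c
        rcases c with a | b
        · have hka : g (Sum.inl a) = (if a = k then 1 else 0) := cnk a
          rw [hg (Sum.inl a), hVec_inl, hka]
          have ha := a.isLt
          have hk := k.isLt
          simp only [Fin.ext_iff, Fin.coe_castSucc]
          split_ifs <;> (try (exfalso; omega)) <;> norm_num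
        · have hlb : g (Sum.inr b) = (if b = l then 1 else 0) := cpl b
          rw [hg (Sum.inr b), hVec_inr, hlb]
          have hb := b.isLt
          have hl := l.isLt
          simp only [Fin.ext_iff, Fin.coe_castSucc]
          split_ifs <;> (try (exfalso; omega)) <;> norm_num
      · right
        refine ⟨Fin.castSucc k, Fin.last e, ?_⟩
        funext c
        rcases c with a | b
        · have hka : g (Sum.inl a) = (if a = k then 1 else 0) := cnk a
          rw [hg (Sum.inl a), hVec_inl, hka]
          have ha := a.isLt
          have hk := k.isLt
          simp only [Fin.ext_iff, Fin.coe_castSucc]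
          split_ifs <;> (try (exfalso; omega)) <;> norm_num
        · have hpb : g (Sum.inr b) = -1 := cpn b
          rw [hg (Sum.inr b), hVec_inr, hpb]
          have hb := b.isLt
          simp only [Fin.val_last]
          split_ifs <;> (try (exfalso; omega)) <;> norm_num
    · rcases cp with cp0 | ⟨l, cpl⟩ | cpn
      · exfalso
        have hv := hcongZ
        rw [sum_neg _ cnn, sum_zero _ cp0] at hv
        exact no_mixed (e:ℤ) mcong (-(e:ℤ) - 0) hv (by omega) (by omega) (by omega) hE
      · right
        refine ⟨Fin.last e, Fin.castSucc l, ?_⟩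
        funext c
        rcases c with a | b
        · have hna : g (Sum.inl a) = -1 := cnn a
          rw [hg (Sum.inl a), hVec_inl, hna]
          have ha := a.isLt
          simp only [Fin.val_last]
          split_ifs <;> (try (exfalso; omega)) <;> norm_num
        · have hlb : g (Sum.inr b) = (if b = l then 1 else 0) := cpl b
          rw [hg (Sum.inr b), hVec_inr, hlb]
          have hb := b.isLt
          have hl := l.isLt
          simp only [Fin.ext_iff, Fin.coe_castSucc]
          split_ifs <;> (try (exfalso; omega)) <;> norm_num
      · right
        refine ⟨Fin.last e, Fin.last e, ?_⟩
        funext c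
        rcases c with a | b
        · have hna : g (Sum.inl a) = -1 := cnn a
          rw [hg (Sum.inl a), hVec_inl, hna]
          have ha := a.isLt
          simp only [Fin.val_last]
          split_ifs <;> (try (exfalso; omega)) <;> norm_num
        · have hpb : g (Sum.inr b) = -1 := cpn b
          rw [hg (Sum.inr b), hVec_inr, hpb]
          have hb := b.isLt
          simp only [Fin.val_last]
          split_ifs <;> (try (exfalso; omega)) <;> norm_num
  · rintro (rfl | ⟨i, j, rfl⟩)
    · refine ⟨zero_mem _, ?_⟩
      have hsum : ∑ i : Fin (e+1), hVec (e+1) i i = 0 := by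
        funext c
        rw [Finset.sum_apply]
        rcases c with a | b
        · simp only [hVec_inl]
          rw [Finset.sum_sub_distrib, sum_ind' (e+1) (a:ℕ) (by omega),
            sum_ind' (e+1) e (by omega)]
          norm_num
        · simp only [hVec_inr]
          rw [Finset.sum_sub_distrib, sum_ind' (e+1) (b:ℕ) (by omega),
            sum_ind' (e+1) e (by omega)]
          norm_num
      have hmem := Finset.centerMass_mem_convexHull (Finset.univ : Finset (Fin (e+1)))
        (w := fun _ => (1:ℝ)) (fun _ _ => zero_le_one)
        (by simp only [Finset.sum_const, Finset.card_univ, Fintype.card_fin, nsmul_eq_mul,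
          mul_one]; positivity)
        (z := fun i => hVec (e+1) i i)
        (s := Set.range fun p : Fin (e+1) × Fin (e+1) => hVec (e+1) p.1 p.2)
        (fun i _ => ⟨(i, i), rfl⟩)
      have hc : Finset.univ.centerMass (fun _ : Fin (e+1) => (1:ℝ))
          (fun i => hVec (e+1) i i) = 0 := by
        rw [Finset.centerMass]
        simp only [one_smul, hsum, smul_zero]
      rwa [hc] at hmem
    · exact ⟨AddSubgroup.subset_closure ⟨(i, j), rfl⟩,
        subset_convexHull ℝ _ ⟨(i, j), rfl⟩⟩
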